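/- Let X = ℝ^n, Ω ⊆ ℝ^n, x̄ ∈ Ω, f_i : ℝ^n → ℝ locally Lipschitz at x̄, and suppose 0 ∈ int U_i for each i ∈ I. If x̄ is a local highly robust weakly efficient solution of (P_U), then T(x̄; Ω) ∩ { d : ⟨x*, d⟩ ≤ 0 for all x* ∈ ∂f_i(x̄) and all i ∈ I } = {0}, where ∂f_i is the Mordukhovich subdifferential and T(x̄; Ω) is the contingent cone. -/

import Mathlib

open Filter Topology

/-- Fréchet subdifferential of `f : ℝⁿ → ℝ` at `x`. -/
def frechetSubdiff {n : ℕ} (f : EuclideanSpace ℝ (Fin n) → ℝ)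
    (x : EuclideanSpace ℝ (Fin n)) : Set (EuclideanSpace ℝ (Fin n)) :=
  {v | ∀ ε > (0 : ℝ), ∀ᶠ y in 𝓝 x,
    -ε * ‖y - x‖ ≤ f y - f x - (inner ℝ v (y - x) : ℝ)}

/-- Mordukhovich (limiting) subdifferential of `f : ℝⁿ → ℝ` at `x`. -/
def limitingSubdiff {n : ℕ} (f : EuclideanSpace ℝ (Fin n) → ℝ)
    (x : EuclideanSpace ℝ (Fin n)) : Set (EuclideanSpace ℝ (Fin n)) :=
  {v | ∃ xs vs : ℕ → EuclideanSpace ℝ (Fin n),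
    (∀ k, vs k ∈ frechetSubdiff f (xs k)) ∧
    Tendsto xs atTop (𝓝 x) ∧ Tendsto vs atTop (𝓝 v)}

/-- Contingent cone to `Ω` at `x`. -/
def contingentCone {n : ℕ} (x : EuclideanSpace ℝ (Fin n))
    (Ω : Set (EuclideanSpace ℝ (Fin n))) : Set (EuclideanSpace ℝ (Fin n)) :=
  {d | ∃ (xs : ℕ → EuclideanSpace ℝ (Fin n)) (ts : ℕ → ℝ),
    (∀ k, xs k ∈ Ω) ∧ (∀ k, 0 < ts k) ∧ Tendsto ts atTop (𝓝 0) ∧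
    Tendsto (fun k => (ts k)⁻¹ • (xs k - x)) atTop (𝓝 d)}

/-!
If `d ≠ 0` lies in both sets, perturb every objective by `u i = τ i • d` with `τ i > 0` so small
that `u i ∈ U i`. Robustness at the points `xs k` of a sequence realising `d ∈ T(x̄; Ω)` forces,
for one fixed `i` and infinitely many `k`, `⟪u i, xs k - x̄⟫ ≤ f i (xs k) - f i x̄`. Averaging
`f i` over small balls and applying Rademacher's theorem turns each of these difference quotients
into a gradient at a nearby point of differentiability. A limit of these gradients is a limiting
subgradient `v` with `⟪v, d⟫ ≥ ⟪u i, d⟫ = τ i ‖d‖² > 0`, contradicting the polar condition.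
-/

open MeasureTheory ProbabilityTheory
open scoped NNReal InnerProductSpace

section LipschitzAverage

variable {E : Type*} [NormedAddCommGroup E] {g : E → ℝ} {K : ℝ≥0} {δ : ℝ}

lemma LipschitzWith.norm_comp_add_sub_le (hg : LipschitzWith K g) (c : E) {w : E}
    (hw : ‖w‖ < δ) : ‖g (c + w) - g c‖ ≤ K * δ := by
  calc ‖g (c + w) - g c‖ = dist (g (c + w)) (g c) := (dist_eq_norm _ _).symm
    _ ≤ K * dist (c + w) c := hg.dist_le_mul _ _
    _ ≤ K * δ := by
      rw [dist_self_add_left]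
      exact mul_le_mul_of_nonneg_left hw.le K.coe_nonneg

variable [MeasurableSpace E] [BorelSpace E] {μ ν : Measure E}

lemma LipschitzWith.integrable_comp_add [IsFiniteMeasure ν] (hg : LipschitzWith K g)
    (hsupp : ∀ᵐ w ∂ν, ‖w‖ < δ) (c : E) : Integrable (fun w ↦ g (c + w)) ν := by
  refine Integrable.of_bound
    (hg.continuous.comp (continuous_const_add c)).aestronglyMeasurable (‖g c‖ + K * δ) ?_
  filter_upwards [hsupp] with w hw
  linarith [norm_sub_norm_le (g (c + w)) (g c), hg.norm_comp_add_sub_le c hw]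

lemma LipschitzWith.abs_integral_comp_add_sub_le [IsProbabilityMeasure ν]
    (hg : LipschitzWith K g) (hsupp : ∀ᵐ w ∂ν, ‖w‖ < δ) (c : E) :
    |∫ w, g (c + w) ∂ν - g c| ≤ K * δ := by
  have h := norm_integral_le_of_norm_le_const (hsupp.mono fun w hw ↦ hg.norm_comp_add_sub_le c hw)
  rwa [integral_sub (hg.integrable_comp_add hsupp c) (integrable_const _), integral_const,
    probReal_univ, one_smul, mul_one] at h

variable [NormedSpace ℝ E] [FiniteDimensional ℝ E]

lemma LipschitzWith.ae_differentiableAt_add [μ.IsAddHaarMeasure] (hg : LipschitzWith K g)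
    (hν : ν ≪ μ) (c : E) : ∀ᵐ w ∂ν, DifferentiableAt ℝ g (c + w) :=
  hν <| (measure_preimage_add μ c {x | ¬DifferentiableAt ℝ g x}).trans
    (ae_iff.1 hg.ae_differentiableAt)

lemma LipschitzWith.hasDerivAt_integral_comp_line [μ.IsAddHaarMeasure] [IsFiniteMeasure ν]
    (hg : LipschitzWith K g) (hν : ν ≪ μ) (hsupp : ∀ᵐ w ∂ν, ‖w‖ < δ) (a e : E) (t : ℝ) :
    HasDerivAt (fun t ↦ ∫ w, g (a + t • e + w) ∂ν)
      (∫ w, fderiv ℝ g (a + t • e + w) e ∂ν) t := by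
  have hline : ∀ w, LipschitzWith ‖e‖₊ fun s : ℝ ↦ a + s • e + w := fun w ↦
    LipschitzWith.of_dist_le_mul fun s r ↦ by
      simp [dist_eq_norm, ← sub_smul, norm_smul, mul_comm]
  refine (hasDerivAt_integral_of_dominated_loc_of_lip (Metric.ball_mem_nhds t one_pos)
    (bound := fun _ ↦ ((K * ‖e‖₊ : ℝ≥0) : ℝ))
    (Eventually.of_forall fun _ ↦ (hg.integrable_comp_add hsupp _).aestronglyMeasurable)
    (hg.integrable_comp_add hsupp _)
    ((measurable_fderiv_apply_const ℝ g e).comp (measurable_const_add _)).aestronglyMeasurable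
    (Eventually.of_forall fun w ↦ ?_) (integrable_const _) ?_).2
  · rw [Real.nnabs_coe]
    exact (hg.comp (hline w)).lipschitzOnWith
  · filter_upwards [hg.ae_differentiableAt_add hν (a + t • e)] with w hw
    have hderiv : HasDerivAt (fun s : ℝ ↦ a + s • e + w) e t := by
      simpa using (((hasDerivAt_id t).smul_const e).const_add a).add_const w
    exact hw.hasFDerivAt.comp_hasDerivAt t hderiv

lemma LipschitzWith.exists_differentiableAt_sub_le_fderiv (hg : LipschitzWith K g) (a b : E)
    {θ : ℝ} (hθ : 0 < θ) : ∃ z, dist z a ≤ dist b a + θ ∧ DifferentiableAt ℝ g z ∧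
      g b - g a - θ ≤ fderiv ℝ g z (b - a) := by
  set δ := θ / (2 * K + 1) with hδ_def
  have hδ : 0 < δ := by positivity
  have hδθ : 2 * K * δ + δ = θ := by rw [hδ_def]; field_simp
  let μ : Measure E := Measure.addHaar
  set B := Metric.ball (0 : E) δ
  have : IsProbabilityMeasure μ[|B] := cond_isProbabilityMeasure_of_finite
    (Metric.measure_ball_pos μ 0 hδ).ne' measure_ball_lt_top.ne
  have hsupp : ∀ᵐ w ∂μ[|B], ‖w‖ < δ :=
    (ae_cond_mem measurableSet_ball).mono fun w hw ↦ mem_ball_zero_iff.1 hw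
  set e := b - a
  -- the mean value theorem for this ball average of `g` along the segment yields a point where
  -- the average of the directional derivatives is at least `g b - g a - 2 K δ`
  set h : ℝ → ℝ := fun t ↦ ∫ w, g (a + t • e + w) ∂μ[|B]
  have hderiv := hg.hasDerivAt_integral_comp_line cond_absolutelyContinuous hsupp a e
  obtain ⟨t, ⟨ht0, ht1⟩, hslope⟩ := exists_hasDerivAt_eq_slope h _ one_pos
    (fun t _ ↦ (hderiv t).continuousAt.continuousWithinAt) (fun t _ ↦ hderiv t)
  have hb : |h 1 - g b| ≤ K * δ := by
    simpa [h, e] using hg.abs_integral_comp_add_sub_le hsupp b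
  have ha : |h 0 - g a| ≤ K * δ := by simpa [h] using hg.abs_integral_comp_add_sub_le hsupp a
  have hint : Integrable (fun w ↦ fderiv ℝ g (a + t • e + w) e) μ[|B] :=
    Integrable.of_bound
      ((measurable_fderiv_apply_const ℝ g e).comp (measurable_const_add _)).aestronglyMeasurable
      (K * ‖e‖) (Eventually.of_forall fun w ↦
        ((fderiv ℝ g _).le_opNorm e).trans (by gcongr; exact norm_fderiv_le_of_lipschitz ℝ hg))
  have hN : μ[|B] {w | ¬(‖w‖ < δ ∧ DifferentiableAt ℝ g (a + t • e + w))} = 0 :=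
    ae_iff.1 (hsupp.and (hg.ae_differentiableAt_add cond_absolutelyContinuous _))
  obtain ⟨w, hw, hw_ge⟩ := exists_notMem_null_integral_le hint hN
  rw [Set.mem_ofPred_eq, not_not] at hw
  refine ⟨a + t • e + w, ?_, hw.2, ?_⟩
  · calc dist (a + t • e + w) a = ‖t • e + w‖ := by
          rw [dist_eq_norm, add_assoc, add_sub_cancel_left]
      _ ≤ t * ‖e‖ + δ := by
        grw [norm_add_le, norm_smul, Real.norm_of_nonneg ht0.le, hw.1]
      _ ≤ dist b a + θ := by
        rw [dist_eq_norm]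
        nlinarith [norm_nonneg e, K.coe_nonneg]
  · rw [hslope, sub_zero, div_one] at hw_ge
    rw [abs_le] at hb ha
    nlinarith [K.coe_nonneg]

end LipschitzAverage

lemma tendsto_of_tendsto_inv_smul_sub {E : Type*} [NormedAddCommGroup E] [NormedSpace ℝ E]
    {xs : ℕ → E} {ts : ℕ → ℝ} {x d : E} (hts : ∀ k, ts k ≠ 0)
    (hts0 : Tendsto ts atTop (𝓝 0)) (hq : Tendsto (fun k ↦ (ts k)⁻¹ • (xs k - x)) atTop (𝓝 d)) :
    Tendsto xs atTop (𝓝 x) := by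
  have h := tendsto_const_nhds (x := x) |>.add (hts0.smul hq)
  rw [zero_smul, add_zero] at h
  refine h.congr fun k ↦ ?_
  rw [smul_inv_smul₀ (hts k), add_sub_cancel]

lemma exists_pos_smul_mem_of_mem_nhds_zero {E : Type*} [AddCommGroup E] [Module ℝ E]
    [TopologicalSpace E] [ContinuousSMul ℝ E] {U : Set E} (hU : U ∈ 𝓝 0) (d : E) :
    ∃ τ > (0 : ℝ), τ • d ∈ U := by
  have h : ∀ᶠ τ in 𝓝 (0 : ℝ), τ • d ∈ U :=
    (continuous_id.smul continuous_const).tendsto' 0 0 (zero_smul ℝ d) hU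
  have h' : ∀ᶠ τ in 𝓝[>] (0 : ℝ), 0 < τ ∧ τ • d ∈ U :=
    eventually_mem_nhdsWithin.and (nhdsWithin_le_nhds h)
  exact h'.exists

section Subdifferential

variable {n : ℕ} {f g : EuclideanSpace ℝ (Fin n) → ℝ} {x : EuclideanSpace ℝ (Fin n)}

lemma zero_mem_contingentCone {Ω : Set (EuclideanSpace ℝ (Fin n))} (hx : x ∈ Ω) :
    0 ∈ contingentCone x Ω :=
  ⟨fun _ ↦ x, fun k ↦ 1 / (k + 1), fun _ ↦ hx, fun _ ↦ by positivity,
    tendsto_one_div_add_atTop_nhds_zero_nat, by simp⟩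

lemma DifferentiableAt.gradient_mem_frechetSubdiff (hg : DifferentiableAt ℝ g x) :
    gradient g x ∈ frechetSubdiff g x := by
  intro ε hε
  filter_upwards [hg.hasFDerivAt.isLittleO.bound hε] with y hy
  rw [inner_gradient_left]
  rw [Real.norm_eq_abs] at hy
  linarith [neg_abs_le (g y - g x - fderiv ℝ g x (y - x))]

lemma Filter.EventuallyEq.frechetSubdiff_eq (hfg : f =ᶠ[𝓝 x] g) :
    frechetSubdiff f x = frechetSubdiff g x := by
  suffices ∀ {f g}, f =ᶠ[𝓝 x] g → frechetSubdiff f x ⊆ frechetSubdiff g x from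
    (this hfg).antisymm (this hfg.symm)
  intro f g hfg v hv ε hε
  filter_upwards [hv ε hε, hfg] with y hvy hy
  rwa [← hy, ← hfg.eq_of_nhds]

lemma mem_limitingSubdiff_of_eventually {xs vs : ℕ → EuclideanSpace ℝ (Fin n)}
    {v : EuclideanSpace ℝ (Fin n)} (hvs : ∀ᶠ k in atTop, vs k ∈ frechetSubdiff f (xs k))
    (hxs : Tendsto xs atTop (𝓝 x)) (hv : Tendsto vs atTop (𝓝 v)) : v ∈ limitingSubdiff f x := by
  obtain ⟨N, hN⟩ := eventually_atTop.1 hvs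
  exact ⟨fun k ↦ xs (k + N), fun k ↦ vs (k + N), fun k ↦ hN _ (Nat.le_add_left N k),
    (tendsto_add_atTop_iff_nat N).2 hxs, (tendsto_add_atTop_iff_nat N).2 hv⟩

lemma Filter.EventuallyEq.limitingSubdiff_eq (hfg : f =ᶠ[𝓝 x] g) :
    limitingSubdiff f x = limitingSubdiff g x := by
  suffices ∀ {f g}, f =ᶠ[𝓝 x] g → limitingSubdiff f x ⊆ limitingSubdiff g x from
    (this hfg).antisymm (this hfg.symm)
  rintro f g hfg v ⟨xs, vs, hvs, hxs, hv⟩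
  refine mem_limitingSubdiff_of_eventually ?_ hxs hv
  filter_upwards [hxs.eventually hfg.eventuallyEq_nhds] with k hk
  rw [← hk.frechetSubdiff_eq]
  exact hvs k

variable {K : ℝ≥0} {xs : ℕ → EuclideanSpace ℝ (Fin n)} {ts : ℕ → ℝ}
  {u d : EuclideanSpace ℝ (Fin n)}

lemma LipschitzWith.exists_limitingSubdiff_inner_ge (hg : LipschitzWith K g)
    (hts : ∀ k, 0 < ts k) (hts0 : Tendsto ts atTop (𝓝 0))
    (hq : Tendsto (fun k ↦ (ts k)⁻¹ • (xs k - x)) atTop (𝓝 d))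
    (hle : ∀ k, ⟪u, xs k - x⟫_ℝ ≤ g (xs k) - g x) :
    ∃ v ∈ limitingSubdiff g x, ⟪u, d⟫_ℝ ≤ ⟪v, d⟫_ℝ := by
  set q := fun k ↦ (ts k)⁻¹ • (xs k - x)
  have hxs := tendsto_of_tendsto_inv_smul_sub (fun k ↦ (hts k).ne') hts0 hq
  choose z hz_dist hz_diff hz_fderiv using
    fun k ↦ hg.exists_differentiableAt_sub_le_fderiv x (xs k) (pow_pos (hts k) 2)
  have hz : Tendsto z atTop (𝓝 x) := by
    refine tendsto_iff_dist_tendsto_zero.2 (squeeze_zero (fun _ ↦ dist_nonneg) hz_dist ?_)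
    simpa using (tendsto_iff_dist_tendsto_zero.1 hxs).add (hts0.pow 2)
  obtain ⟨v, -, ψ, hψ, hv⟩ := tendsto_subseq_of_bounded (x := fun k ↦ gradient g (z k))
    (Metric.isBounded_closedBall (x := 0) (r := K)) fun k ↦ by
      rw [mem_closedBall_zero_iff, gradient, LinearIsometryEquiv.norm_map]
      exact norm_fderiv_le_of_lipschitz ℝ hg
  refine ⟨v, ⟨z ∘ ψ, _, fun k ↦ (hz_diff (ψ k)).gradient_mem_frechetSubdiff,
    hz.comp hψ.tendsto_atTop, hv⟩, ?_⟩
  -- the two bounds on `g (xs k) - g x` are `ts k` times the inner products below, up to `ts k ^ 2`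
  have hkey : ∀ k, ⟪u, q k⟫_ℝ - ts k ≤ ⟪gradient g (z k), q k⟫_ℝ := by
    intro k
    have hxq : xs k - x = ts k • q k := (smul_inv_smul₀ (hts k).ne' _).symm
    have h1 := hle k
    have h2 := hz_fderiv k
    rw [hxq, real_inner_smul_right] at h1
    rw [hxq, map_smul, smul_eq_mul, ← inner_gradient_left] at h2
    nlinarith [hts k]
  have hlim := (((tendsto_const_nhds (x := u)).inner hq).sub hts0).comp hψ.tendsto_atTop
  rw [sub_zero] at hlim
  exact le_of_tendsto_of_tendsto' hlim (hv.inner (hq.comp hψ.tendsto_atTop)) fun k ↦ hkey (ψ k)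

lemma LipschitzOnWith.exists_limitingSubdiff_inner_ge {ε : ℝ}
    (hf : LipschitzOnWith K f (Metric.ball x ε)) (hε : 0 < ε)
    (hts : ∀ k, 0 < ts k) (hts0 : Tendsto ts atTop (𝓝 0))
    (hq : Tendsto (fun k ↦ (ts k)⁻¹ • (xs k - x)) atTop (𝓝 d))
    (hle : ∃ᶠ k in atTop, ⟪u, xs k - x⟫_ℝ ≤ f (xs k) - f x) :
    ∃ v ∈ limitingSubdiff f x, ⟪u, d⟫_ℝ ≤ ⟪v, d⟫_ℝ := by
  obtain ⟨g, hg, hfg⟩ := hf.extend_real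
  have hxs := tendsto_of_tendsto_inv_smul_sub (fun k ↦ (hts k).ne') hts0 hq
  obtain ⟨φ, hφ, hφle⟩ := extraction_of_frequently_atTop
    (hle.and_eventually (hxs (Metric.ball_mem_nhds x hε)))
  rw [(Filter.eventuallyEq_of_mem (Metric.ball_mem_nhds x hε) hfg).limitingSubdiff_eq]
  refine hg.exists_limitingSubdiff_inner_ge (fun k ↦ hts (φ k))
    (hts0.comp hφ.tendsto_atTop) (hq.comp hφ.tendsto_atTop) fun k ↦ ?_
  rw [← hfg (hφle k).2, ← hfg (Metric.mem_ball_self hε)]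
  exact (hφle k).1

end Subdifferential

/-- In `ℝⁿ`, if `0 ∈ int U_i` for each `i` and `x̄` is a local highly
robust weakly efficient solution with `f_i` locally Lipschitz, then the contingent
cone meets the common negative-polar set of the subdifferentials only at `0`. -/
theorem contingent_cone_inter_polar_eq_zero
    {n p : ℕ} (Ω : Set (EuclideanSpace ℝ (Fin n)))
    (f : Fin p → EuclideanSpace ℝ (Fin n) → ℝ)
    (U : Fin p → Set (EuclideanSpace ℝ (Fin n)))
    (hU : ∀ i, (0 : EuclideanSpace ℝ (Fin n)) ∈ interior (U i))
    (xb : EuclideanSpace ℝ (Fin n)) (hxb : xb ∈ Ω)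
    (hf : ∀ i, ∃ K : NNReal, ∃ ε > (0 : ℝ),
      LipschitzOnWith K (f i) (Metric.ball xb ε))
    (hrob : ∃ δ > (0 : ℝ), ∀ u : Fin p → EuclideanSpace ℝ (Fin n),
      (∀ i, u i ∈ U i) →
      ¬ ∃ x ∈ Ω ∩ Metric.ball xb δ,
        ∀ i, f i x - (inner ℝ (u i) x : ℝ) < f i xb - (inner ℝ (u i) xb : ℝ)) :
    contingentCone xb Ω ∩
      {d | ∀ i, ∀ v ∈ limitingSubdiff (f i) xb, (inner ℝ v d : ℝ) ≤ 0} = {0} := by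
  obtain ⟨δ, hδ, hrob⟩ := hrob
  refine Set.eq_singleton_iff_unique_mem.2
    ⟨⟨zero_mem_contingentCone hxb, fun i v _ ↦ by simp⟩, ?_⟩
  rintro d ⟨⟨xs, ts, hxsΩ, hts, hts0, hq⟩, hdpolar⟩
  by_contra hd
  choose τ hτ hτU using fun i ↦ exists_pos_smul_mem_of_mem_nhds_zero
    (mem_interior_iff_mem_nhds.1 (hU i)) d
  have hxs := tendsto_of_tendsto_inv_smul_sub (fun k ↦ (hts k).ne') hts0 hq
  have hsome : ∀ᶠ k in atTop, ∃ i, ⟪τ i • d, xs k - xb⟫_ℝ ≤ f i (xs k) - f i xb := by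
    filter_upwards [hxs (Metric.ball_mem_nhds xb hδ)] with k hk
    by_contra! hall
    refine hrob _ hτU ⟨xs k, ⟨hxsΩ k, hk⟩, fun i ↦ ?_⟩
    linarith [hall i, inner_sub_right (𝕜 := ℝ) (τ i • d) (xs k) xb]
  obtain ⟨i, hi⟩ := frequently_exists.1 hsome.frequently
  obtain ⟨K, ε, hε, hlip⟩ := hf i
  obtain ⟨v, hv, hvd⟩ := hlip.exists_limitingSubdiff_inner_ge hε hts hts0 hq hi
  have hpos : 0 < ⟪τ i • d, d⟫_ℝ := by
    rw [real_inner_smul_left, real_inner_self_eq_norm_sq]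
    have := norm_pos_iff.2 hd
    have := hτ i
    positivity
  linarith [hdpolar i v hv]
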